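/- arXiv:2208.14370 — 7 statements merged into one kernel-verified Lean document; each statement's English description precedes it below -/
import Mathlib

section
/- Let n, s, m be natural numbers with n = s + m, m ≥ 1, let A : ℝ^{2n} → ℝ^{2n} be an invertible linear map and let R > 0. Then lim_{a→0⁺} ∫_{{x ∈ ℝ^{2n} : ‖Ax‖ < R}} a^{−m} ‖Ax‖^{−2s} e^{−‖Ax‖²/(2a)} dλ(x) = vol(S^{2n−1}) · 2^{m−1} · (m−1)! / |det A|. -/
open MeasureTheory Filter

/-- The volume of the unit sphere `S^{2n-1} ⊂ ℝ^{2n}`. -/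
noncomputable def volSphere (n : ℕ) : ℝ := 2 * Real.pi ^ n / (Nat.factorial (n - 1))

/-!
Substituting `y = A x` turns the integral into `|det A|⁻¹` times an integral of a radial function
over the ball of radius `R`, and polar coordinates reduce that to `2n · vol(B¹) ∫₀ᴿ`. Against the
radial weight `r^(2n-1)` the factor `r^(-2s)` leaves `r^(2m-1)`, and scaling `r = √(2a) t` absorbs
`a^(-m)` exactly, leaving `2^m ∫₀^{R/√(2a)} t^(2m-1) e^(-t²) dt`. As `a → 0⁺` the upper limit
tends to `∞` and the integral to `Γ(m)/2 = (m-1)!/2`.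
-/

open Set Metric Real Topology
open scoped Nat

section AddHaar

variable {E F : Type*} [NormedAddCommGroup E] [NormedSpace ℝ E] [MeasurableSpace E]
  [BorelSpace E] [FiniteDimensional ℝ E] (μ : Measure E) [μ.IsAddHaarMeasure]
  [NormedAddCommGroup F] [NormedSpace ℝ F]

theorem setIntegral_preimage_comp_linearEquiv (A : E ≃ₗ[ℝ] E) (s : Set E) (f : E → F) :
    ∫ x in A ⁻¹' s, f (A x) ∂μ = |LinearMap.det (A : E →ₗ[ℝ] E)|⁻¹ • ∫ y in s, f y ∂μ := by
  let e : E ≃ᵐ E := A.toContinuousLinearEquiv.toHomeomorph.toMeasurableEquiv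
  have hmap : μ.map e = ENNReal.ofReal |LinearMap.det (A : E →ₗ[ℝ] E)|⁻¹ • μ := by
    simpa [e] using μ.map_linearMap_addHaar_eq_smul_addHaar A.isUnit_det'.ne_zero
  calc ∫ x in A ⁻¹' s, f (A x) ∂μ = ∫ y in s, f y ∂μ.map e := by
        rw [e.restrict_map, integral_map_equiv]; rfl
    _ = _ := by
        rw [hmap, Measure.restrict_smul, integral_smul_measure,
          ENNReal.toReal_ofReal (by positivity)]

theorem setIntegral_norm_lt_eq_intervalIntegral [Nontrivial E] {R : ℝ} (hR : 0 ≤ R) (f : ℝ → F) :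
    ∫ y in {y : E | ‖y‖ < R}, f ‖y‖ ∂μ =
      Module.finrank ℝ E • μ.real (ball 0 1) •
        ∫ r in 0..R, r ^ (Module.finrank ℝ E - 1) • f r := by
  have hind : {y : E | ‖y‖ < R}.indicator (fun y => f ‖y‖) =
      fun y => (Iio R).indicator f ‖y‖ := by
    ext y; by_cases hy : ‖y‖ < R <;> simp [hy]
  have hradial : ∫ r in Ioi 0, r ^ (Module.finrank ℝ E - 1) • (Iio R).indicator f r =
      ∫ r in Ioo 0 R, r ^ (Module.finrank ℝ E - 1) • f r := by
    rw [← Ioi_inter_Iio, ← setIntegral_indicator measurableSet_Iio]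
    congr 1 with r
    by_cases hr : r < R <;> simp [hr]
  rw [← integral_indicator (measurableSet_lt measurable_norm measurable_const), hind,
    integral_fun_norm_addHaar, hradial, intervalIntegral.integral_of_le hR,
    integral_Ioc_eq_integral_Ioo]

end AddHaar

theorem intervalIntegral_pow_mul_exp_neg_sq_div {b : ℝ} (hb : 0 < b) (k : ℕ) (R : ℝ) :
    ∫ r in 0..R, r ^ k * exp (-r ^ 2 / b) =
      √b ^ (k + 1) * ∫ t in 0..R / √b, t ^ k * exp (-t ^ 2) := by
  have hc : 0 < √b := sqrt_pos.mpr hb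
  have hsub := intervalIntegral.smul_integral_comp_mul_right
    (fun r => r ^ k * exp (-r ^ 2 / b)) √b (a := 0) (b := R / √b)
  rw [zero_mul, div_mul_cancel₀ _ hc.ne'] at hsub
  rw [← hsub, smul_eq_mul, pow_succ', mul_assoc, ← intervalIntegral.integral_const_mul (√b ^ k)]
  congr 1
  refine intervalIntegral.integral_congr fun t _ => ?_
  have hexp : -(t * √b) ^ 2 / b = -t ^ 2 := by
    rw [mul_pow, sq_sqrt hb.le]; field_simp
  rw [hexp, mul_pow]
  ring

theorem tendsto_intervalIntegral_pow_mul_exp_neg_sq (k : ℕ) :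
    Tendsto (fun X => ∫ t in 0..X, t ^ k * exp (-t ^ 2)) atTop
      (𝓝 (Gamma ((k + 1) / 2) / 2)) := by
  have hk : (-1 : ℝ) < k := neg_one_lt_zero.trans_le k.cast_nonneg
  have hrpow : (fun t : ℝ => t ^ (k : ℝ) * exp (-t ^ (2 : ℝ))) = fun t => t ^ k * exp (-t ^ 2) := by
    ext t; rw [rpow_natCast, rpow_two]
  have hint := integrableOn_rpow_mul_exp_neg_rpow hk two_pos
  have hval := integral_rpow_mul_exp_neg_rpow two_pos hk
  rw [hrpow] at hint hval
  rw [show Gamma ((k + 1) / 2) / 2 = ∫ t in Ioi 0, t ^ k * exp (-t ^ 2) by rw [hval]; ring]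
  exact intervalIntegral_tendsto_integral_Ioi 0 hint tendsto_id

theorem tendsto_div_sqrt_mul_nhdsGT_zero {R c : ℝ} (hR : 0 < R) (hc : 0 < c) :
    Tendsto (fun a => R / √(c * a)) (𝓝[>] 0) atTop := by
  simp_rw [div_eq_mul_inv, ← sqrt_inv, mul_inv]
  exact (tendsto_sqrt_atTop.comp
    (tendsto_inv_nhdsGT_zero.const_mul_atTop (inv_pos.mpr hc))).const_mul_atTop hR

theorem volume_real_unitBall_euclideanSpace_even {n : ℕ} (hn : n ≠ 0) :
    (volume : Measure (EuclideanSpace ℝ (Fin (2 * n)))).real (ball 0 1) = π ^ n / n ! := by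
  have : Nonempty (Fin (2 * n)) := ⟨⟨0, by omega⟩⟩
  rw [Measure.real, InnerProductSpace.volume_ball_of_dim_even (finrank_euclideanSpace_fin),
    ENNReal.ofReal_one, one_pow, one_mul, ENNReal.toReal_ofReal (by positivity)]

theorem setIntegral_norm_comp_lt_eq_mul_intervalIntegral {n s m : ℕ} (hnm : n = s + m) (hm : 1 ≤ m)
    (A : EuclideanSpace ℝ (Fin (2 * n)) ≃ₗ[ℝ] EuclideanSpace ℝ (Fin (2 * n))) {R a : ℝ}
    (hR : 0 < R) (ha : 0 < a) :
    ∫ x in {x : EuclideanSpace ℝ (Fin (2 * n)) | ‖A x‖ < R},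
        (a ^ m)⁻¹ * (‖A x‖ ^ (2 * s))⁻¹ * exp (-‖A x‖ ^ 2 / (2 * a)) =
      |LinearMap.det (A : EuclideanSpace ℝ (Fin (2 * n)) →ₗ[ℝ] EuclideanSpace ℝ (Fin (2 * n)))|⁻¹ *
        (2 * n * (π ^ n / n !) * 2 ^ m) * ∫ t in 0..R / √(2 * a), t ^ (2 * m - 1) * exp (-t ^ 2) := by
  have hn : n ≠ 0 := by omega
  have : Nonempty (Fin (2 * n)) := ⟨⟨0, by omega⟩⟩
  have h2a : 0 < 2 * a := by positivity
  have hradial (r : ℝ) : r ^ (2 * n - 1) • ((a ^ m)⁻¹ * (r ^ (2 * s))⁻¹ * exp (-r ^ 2 / (2 * a))) =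
      (a ^ m)⁻¹ * (r ^ (2 * m - 1) * exp (-r ^ 2 / (2 * a))) := by
    have hcancel := pow_sub_of_lt r (show 2 * s < 2 * n - 1 by omega)
    rw [show 2 * n - 1 - 2 * s = 2 * m - 1 by omega] at hcancel
    rw [hcancel, smul_eq_mul]
    ring
  have hscale : (a ^ m)⁻¹ * √(2 * a) ^ (2 * m - 1 + 1) = 2 ^ m := by
    rw [Nat.sub_add_cancel (by omega), pow_mul, sq_sqrt h2a.le, mul_pow]
    field_simp
  refine (setIntegral_preimage_comp_linearEquiv volume A {y | ‖y‖ < R}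
    (fun y => (a ^ m)⁻¹ * (‖y‖ ^ (2 * s))⁻¹ * exp (-‖y‖ ^ 2 / (2 * a)))).trans ?_
  rw [setIntegral_norm_lt_eq_intervalIntegral volume hR.le
      (fun r => (a ^ m)⁻¹ * (r ^ (2 * s))⁻¹ * exp (-r ^ 2 / (2 * a))),
    finrank_euclideanSpace_fin, volume_real_unitBall_euclideanSpace_even hn]
  simp_rw [hradial]
  rw [intervalIntegral.integral_const_mul, intervalIntegral_pow_mul_exp_neg_sq_div h2a,
    ← mul_assoc, hscale, nsmul_eq_mul, smul_eq_mul]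
  push_cast
  ring

/-- The limit from Proposition 5.4(1). -/
theorem stmt_2 (n s m : ℕ) (hnm : n = s + m) (hm : 1 ≤ m)
    (A : EuclideanSpace ℝ (Fin (2 * n)) ≃ₗ[ℝ] EuclideanSpace ℝ (Fin (2 * n)))
    (R : ℝ) (hR : 0 < R) :
    Tendsto (fun a : ℝ =>
        ∫ x in {x : EuclideanSpace ℝ (Fin (2 * n)) | ‖A x‖ < R},
          (a ^ m)⁻¹ * (‖A x‖ ^ (2 * s))⁻¹ * Real.exp (-‖A x‖ ^ 2 / (2 * a)))
      (nhdsWithin 0 (Set.Ioi 0))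
      (nhds (volSphere n * 2 ^ (m - 1) * (Nat.factorial (m - 1)) /
        |LinearMap.det (A : EuclideanSpace ℝ (Fin (2 * n)) →ₗ[ℝ] EuclideanSpace ℝ (Fin (2 * n)))|)) := by
  set D := |LinearMap.det (A : EuclideanSpace ℝ (Fin (2 * n)) →ₗ[ℝ] EuclideanSpace ℝ (Fin (2 * n)))|
  have hlimit : volSphere n * 2 ^ (m - 1) * (m - 1)! / D =
      D⁻¹ * (2 * n * (π ^ n / n !) * 2 ^ m) * (Gamma (((2 * m - 1 : ℕ) + 1) / 2) / 2) := by
    have hΓ : Gamma (((2 * m - 1 : ℕ) + 1) / 2) = (m - 1)! := by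
      rw [← Gamma_nat_eq_factorial]
      congr 1
      push_cast [Nat.cast_sub (by omega : 1 ≤ 2 * m), Nat.cast_sub hm]
      ring
    have hn : n ! = n * (n - 1)! := (Nat.mul_factorial_pred (by omega)).symm
    have hn0 : (n : ℝ) ≠ 0 := by norm_cast; omega
    have h2m : (2 : ℝ) ^ m = 2 * 2 ^ (m - 1) := by rw [← pow_succ']; congr 1; omega
    rw [hΓ, volSphere, hn, h2m]
    push_cast
    field_simp
  rw [hlimit]
  refine Tendsto.congr' (eventually_nhdsWithin_of_forall fun a ha =>
    (setIntegral_norm_comp_lt_eq_mul_intervalIntegral hnm hm A hR (mem_Ioi.mp ha)).symm) ?_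
  exact ((tendsto_intervalIntegral_pow_mul_exp_neg_sq (2 * m - 1)).comp
    (tendsto_div_sqrt_mul_nhdsGT_zero hR two_pos)).const_mul _
end

section
/- Let n ≥ 1 be an integer. For every a > 0, the function y ↦ (e^{−‖y‖²/(2a)} − 1)·‖y‖^{−2n} is integrable on {y ∈ ℝ^{2n} : ‖y‖² < 2a} and ∫_{{‖y‖² < 2a}} (e^{−‖y‖²/(2a)} − 1)·‖y‖^{−2n} dλ(y) = vol(S^{2n−1}) · ∫₀¹ (e^{−u} − 1)/(2u) du; in particular this integral is independent of a. -/
open MeasureTheory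

/-! In polar coordinates the integral becomes `2n · vol(B) · ∫₀^{√(2a)} (e^{-r²/(2a)} - 1) / r dr`,
where `2n · vol(B) = vol(S^{2n-1})` for the unit ball `B`, and the substitution `u = r²/(2a)` turns
the radial integral into `∫₀¹ (e^{-u} - 1) / (2u) du`. Integrability follows from
`|e^{-u} - 1| ≤ u`. -/

open Set Metric Module

section ChangeOfVariables

variable {F : Type*} [NormedAddCommGroup F] [NormedSpace ℝ F] {c : ℝ}

lemma image_sq_div_Ioo_sqrt (hc : 0 < c) :
    (fun r : ℝ => r ^ 2 / c) '' Ioo 0 √c = Ioo 0 1 := by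
  ext u
  simp only [mem_image, mem_Ioo]
  constructor
  · rintro ⟨r, ⟨hr, hrc⟩, rfl⟩
    exact ⟨by positivity, (div_lt_one hc).2 ((Real.lt_sqrt hr.le).1 hrc)⟩
  · rintro ⟨hu, hu1⟩
    refine ⟨√(c * u), ⟨by positivity, Real.sqrt_lt_sqrt (by positivity) (by nlinarith)⟩, ?_⟩
    rw [Real.sq_sqrt (by positivity)]
    field_simp

lemma hasDerivWithinAt_sq_div (x : ℝ) (s : Set ℝ) :
    HasDerivWithinAt (fun r : ℝ => r ^ 2 / c) (2 * x / c) s x := by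
  simpa using ((hasDerivAt_pow 2 x).div_const c).hasDerivWithinAt

lemma injOn_sq_div_Ioo (hc : 0 < c) : InjOn (fun r : ℝ => r ^ 2 / c) (Ioo 0 √c) :=
  fun _ hr _ hs hrs => (pow_left_inj₀ hr.1.le hs.1.le two_ne_zero).1
    ((div_left_inj' hc.ne').1 hrs)

lemma abs_deriv_sq_div_smul (hc : 0 < c) {r : ℝ} (hr : 0 < r) (v : F) :
    |2 * r / c| • (2 * (r ^ 2 / c))⁻¹ • v = r⁻¹ • v := by
  rw [smul_smul, abs_of_pos (by positivity)]
  congr 1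
  field_simp

lemma integrableOn_Ioo_sqrt_comp_sq_div_iff (hc : 0 < c) {h : ℝ → F} :
    IntegrableOn (fun r => r⁻¹ • h (r ^ 2 / c)) (Ioo 0 √c) ↔
      IntegrableOn (fun u => (2 * u)⁻¹ • h u) (Ioo 0 1) := by
  rw [← image_sq_div_Ioo_sqrt hc, integrableOn_image_iff_integrableOn_abs_deriv_smul
    measurableSet_Ioo (fun x _ => hasDerivWithinAt_sq_div x _) (injOn_sq_div_Ioo hc)]
  exact integrableOn_congr_fun (fun r hr => (abs_deriv_sq_div_smul hc hr.1 _).symm)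
    measurableSet_Ioo

lemma integral_Ioo_sqrt_comp_sq_div (hc : 0 < c) (h : ℝ → F) :
    ∫ r in Ioo 0 √c, r⁻¹ • h (r ^ 2 / c) = ∫ u in Ioo 0 1, (2 * u)⁻¹ • h u := by
  rw [← image_sq_div_Ioo_sqrt hc, integral_image_eq_integral_abs_deriv_smul
    measurableSet_Ioo (fun x _ => hasDerivWithinAt_sq_div x _) (injOn_sq_div_Ioo hc)]
  exact setIntegral_congr_fun measurableSet_Ioo
    (fun r hr => (abs_deriv_sq_div_smul hc hr.1 _).symm)

end ChangeOfVariables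

lemma setOf_norm_sq_lt_eq_ball {E : Type*} [SeminormedAddCommGroup E] (c : ℝ) :
    {y : E | ‖y‖ ^ 2 < c} = ball 0 √c := by
  ext y
  simp [Real.lt_sqrt (norm_nonneg y)]

lemma abs_exp_neg_sub_one_le {t : ℝ} (ht : 0 ≤ t) : |Real.exp (-t) - 1| ≤ t := by
  rw [abs_of_nonpos (by simpa using ht)]
  linarith [Real.one_sub_le_exp_neg t]

lemma integrableOn_exp_neg_sub_one_div_Ioo :
    IntegrableOn (fun u : ℝ => (2 * u)⁻¹ • (Real.exp (-u) - 1)) (Ioo 0 1) := by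
  refine Measure.integrableOn_of_bounded (M := 2⁻¹) measure_Ioo_lt_top.ne (by fun_prop) ?_
  filter_upwards [ae_restrict_mem measurableSet_Ioo] with u hu
  rw [smul_eq_mul, norm_mul, norm_inv, Real.norm_eq_abs, Real.norm_eq_abs,
    abs_of_pos (by linarith [hu.1] : 0 < 2 * u), inv_mul_le_iff₀ (by linarith [hu.1])]
  linarith [abs_exp_neg_sub_one_le hu.1.le]

lemma pow_pred_smul_exp_neg_sq_sub_one {d : ℕ} (hd : d ≠ 0) {c r : ℝ} (hr : 0 < r) :
    r ^ (d - 1) • ((Real.exp (-r ^ 2 / c) - 1) * (r ^ d)⁻¹) =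
      r⁻¹ • (Real.exp (-(r ^ 2 / c)) - 1) := by
  obtain ⟨k, rfl⟩ := Nat.exists_eq_add_one_of_ne_zero hd
  rw [smul_eq_mul, smul_eq_mul, neg_div, Nat.add_sub_cancel]
  field_simp
  ring

lemma volSphere_eq_mul_pi_pow_div_factorial {n : ℕ} (hn : 1 ≤ n) :
    volSphere n = (2 * n : ℕ) * (Real.pi ^ n / n.factorial) := by
  obtain ⟨k, rfl⟩ := Nat.exists_eq_add_of_le' hn
  rw [volSphere, Nat.add_sub_cancel, Nat.factorial_succ]
  push_cast
  field_simp

section Radial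

variable {E F : Type*} [NormedAddCommGroup E] [NormedSpace ℝ E] [FiniteDimensional ℝ E]
  [MeasurableSpace E] [BorelSpace E] [Nontrivial E] (μ : Measure E) [μ.IsAddHaarMeasure]
  [NormedAddCommGroup F] [NormedSpace ℝ F] {c : ℝ}

lemma setIntegral_ball_fun_norm_addHaar (f : ℝ → F) (r : ℝ) :
    ∫ x in ball (0 : E) r, f ‖x‖ ∂μ =
      finrank ℝ E • μ.real (ball 0 1) • ∫ y in Ioo 0 r, y ^ (finrank ℝ E - 1) • f y := by
  have hball : ∀ x : E,
      (ball (0 : E) r).indicator (fun x => f ‖x‖) x = (Iio r).indicator f ‖x‖ :=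
    fun x => by simp [indicator]
  have hIoo : ∀ y ∈ Ioi (0 : ℝ),
      y ^ (finrank ℝ E - 1) • (Iio r).indicator f y =
        (Ioo 0 r).indicator (fun y => y ^ (finrank ℝ E - 1) • f y) y := by
    intro y (hy : 0 < y)
    by_cases hyr : y < r <;> simp [hyr, hy]
  rw [← integral_indicator measurableSet_ball, funext hball, integral_fun_norm_addHaar,
    setIntegral_congr_fun measurableSet_Ioi hIoo, setIntegral_indicator measurableSet_Ioo,
    inter_eq_self_of_subset_right Ioo_subset_Ioi_self]

lemma integrableOn_ball_exp_neg_sq_sub_one (hc : 0 < c) :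
    IntegrableOn (fun y : E => (Real.exp (-‖y‖ ^ 2 / c) - 1) * (‖y‖ ^ finrank ℝ E)⁻¹)
      (ball 0 √c) μ := by
  rw [integrableOn_fun_norm_addHaar μ (f := fun r => (Real.exp (-r ^ 2 / c) - 1) * (r ^ _)⁻¹),
    integrableOn_congr_fun (fun r hr => pow_pred_smul_exp_neg_sq_sub_one finrank_pos.ne' hr.1)
      measurableSet_Ioo,
    integrableOn_Ioo_sqrt_comp_sq_div_iff hc (h := fun u => Real.exp (-u) - 1)]
  exact integrableOn_exp_neg_sub_one_div_Ioo

lemma setIntegral_ball_exp_neg_sq_sub_one (hc : 0 < c) :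
    ∫ y in ball (0 : E) √c, (Real.exp (-‖y‖ ^ 2 / c) - 1) * (‖y‖ ^ finrank ℝ E)⁻¹ ∂μ =
      finrank ℝ E • μ.real (ball 0 1) • ∫ u in Ioo 0 1, (2 * u)⁻¹ • (Real.exp (-u) - 1) := by
  rw [setIntegral_ball_fun_norm_addHaar μ (fun r => (Real.exp (-r ^ 2 / c) - 1) * (r ^ _)⁻¹),
    setIntegral_congr_fun measurableSet_Ioo
      (fun r hr => pow_pred_smul_exp_neg_sq_sub_one finrank_pos.ne' hr.1),
    integral_Ioo_sqrt_comp_sq_div hc (fun u => Real.exp (-u) - 1)]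

end Radial

/-- An identity from the proof of Proposition 5.4(2). -/
theorem stmt_3 (n : ℕ) (hn : 1 ≤ n) (a : ℝ) (ha : 0 < a) :
    IntegrableOn
      (fun y : EuclideanSpace ℝ (Fin (2 * n)) =>
        (Real.exp (-‖y‖ ^ 2 / (2 * a)) - 1) * (‖y‖ ^ (2 * n))⁻¹)
      {y : EuclideanSpace ℝ (Fin (2 * n)) | ‖y‖ ^ 2 < 2 * a} ∧
    ∫ y in {y : EuclideanSpace ℝ (Fin (2 * n)) | ‖y‖ ^ 2 < 2 * a},
        (Real.exp (-‖y‖ ^ 2 / (2 * a)) - 1) * (‖y‖ ^ (2 * n))⁻¹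
      = volSphere n * ∫ u in Set.Ioc (0 : ℝ) 1, (Real.exp (-u) - 1) / (2 * u) := by
  have hdim : finrank ℝ (EuclideanSpace ℝ (Fin (2 * n))) = 2 * n := finrank_euclideanSpace_fin
  have : Nontrivial (EuclideanSpace ℝ (Fin (2 * n))) :=
    Module.nontrivial_of_finrank_pos (R := ℝ) (by omega)
  have h2a : 0 < 2 * a := by positivity
  have hint := integrableOn_ball_exp_neg_sq_sub_one
    (volume : Measure (EuclideanSpace ℝ (Fin (2 * n)))) h2a
  have heq := setIntegral_ball_exp_neg_sq_sub_one
    (volume : Measure (EuclideanSpace ℝ (Fin (2 * n)))) h2a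
  rw [hdim] at hint heq
  rw [setOf_norm_sq_lt_eq_ball, heq, measureReal_def,
    InnerProductSpace.volume_ball_of_dim_even hdim, volSphere_eq_mul_pi_pow_div_factorial hn,
    integral_Ioc_eq_integral_Ioo]
  refine ⟨hint, ?_⟩
  have hball : 0 ≤ Real.pi ^ n / n.factorial := by positivity
  simp_rw [ENNReal.ofReal_one, one_pow, one_mul, ENNReal.toReal_ofReal hball, nsmul_eq_mul,
    smul_eq_mul, inv_mul_eq_div, mul_assoc]
end

section
/- Let (φ_m)_{m≥0} be a sequence of real numbers such that the power series Σ_{m≥0} φ_m x^{2m} has radius of convergence strictly greater than 1, and set φ(r) := Σ_{m≥0} φ_m r^{2m}. Then the function r ↦ (φ(r) − φ(1))/(1 − r²) is integrable on (−1, 1), the series Σ_{m≥1} φ_m (2·H_{2m−1} − H_{m−1}) converges absolutely, and ∫_{−1}^1 (φ(r) − φ(1))/(1 − r²) dr = −Σ_{m≥1} φ_m (2·H_{2m−1} − H_{m−1}). -/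
open MeasureTheory
open scoped ENNReal

/-- The `m`-th harmonic number `H_m = Σ_{j=1}^m 1/j`, with `H_0 = 0`. -/
noncomputable def harmonicNum (m : ℕ) : ℝ := ∑ j ∈ Finset.range m, 1 / ((j : ℝ) + 1)

/-- Partial sums of `2/(2k+1)`. -/
noncomputable def cseq (m : ℕ) : ℝ := ∑ k ∈ Finset.range m, 2 / (2 * (k : ℝ) + 1)

lemma harmonicNum_succ (k : ℕ) : harmonicNum (k + 1) = harmonicNum k + 1 / ((k : ℝ) + 1) := by
  simp [harmonicNum, Finset.sum_range_succ]

lemma harmonicNum_nonneg (m : ℕ) : 0 ≤ harmonicNum m :=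
  Finset.sum_nonneg fun j _ => by positivity

lemma harmonicNum_le (m : ℕ) : harmonicNum m ≤ m := by
  calc harmonicNum m ≤ ∑ _j ∈ Finset.range m, (1 : ℝ) := by
        refine Finset.sum_le_sum fun j _ => ?_
        rw [div_le_one (by positivity)]
        have : (0:ℝ) ≤ (j:ℝ) := Nat.cast_nonneg j
        linarith
    _ = m := by simp

lemma cseq_nonneg (m : ℕ) : 0 ≤ cseq m :=
  Finset.sum_nonneg fun k _ => by positivity

lemma cseq_le (m : ℕ) : cseq m ≤ 2 * m := by
  calc cseq m ≤ ∑ _k ∈ Finset.range m, (2 : ℝ) := by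
        refine Finset.sum_le_sum fun k _ => ?_
        rw [div_le_iff₀ (by positivity)]
        have : (0:ℝ) ≤ (k:ℝ) := Nat.cast_nonneg k
        nlinarith
    _ = 2 * m := by simp [mul_comm]

lemma cseq_succ (m : ℕ) : cseq (m + 1) = 2 * harmonicNum (2 * m + 1) - harmonicNum m := by
  induction m with
  | zero => simp [cseq, harmonicNum]
  | succ n ih =>
    have h1 : cseq (n + 2) = cseq (n + 1) + 2 / (2 * ((n : ℝ) + 1) + 1) := by
      simp only [cseq, Finset.sum_range_succ]
      push_cast
      ring
    have e1 : 2 * (n + 1) + 1 = (2 * n + 1) + 1 + 1 := by ring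
    have h2 : harmonicNum (2 * (n + 1) + 1)
        = harmonicNum (2 * n + 1) + 1 / (2 * (n : ℝ) + 2) + 1 / (2 * (n : ℝ) + 3) := by
      rw [e1, harmonicNum_succ, harmonicNum_succ]
      push_cast
      ring
    have h3 : harmonicNum (n + 1) = harmonicNum n + 1 / ((n : ℝ) + 1) := harmonicNum_succ n
    rw [h1, ih, h2, h3]
    have d1 : (2 * (n : ℝ) + 2) ≠ 0 := by positivity
    have d2 : (2 * (n : ℝ) + 3) ≠ 0 := by positivity
    have d3 : ((n : ℝ) + 1) ≠ 0 := by positivity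
    field_simp
    ring

/-- auxiliary polynomial summand -/
noncomputable def gAux (φ : ℕ → ℝ) (m : ℕ) (r : ℝ) : ℝ :=
  -(φ m * ∑ k ∈ Finset.range m, r ^ (2 * k))

lemma integral_gAux (φ : ℕ → ℝ) (m : ℕ) :
    ∫ r in Set.Ioo (-1 : ℝ) 1, gAux φ m r = -(φ m * cseq m) := by
  have hle : (-1 : ℝ) ≤ 1 := by norm_num
  rw [← integral_Ioc_eq_integral_Ioo, ← intervalIntegral.integral_of_le hle]
  have hint : ∀ k ∈ Finset.range m,
      IntervalIntegrable (fun r : ℝ => r ^ (2 * k)) volume (-1) 1 :=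
    fun k _ => (continuous_pow _).intervalIntegrable _ _
  have : (∫ r in (-1:ℝ)..1, gAux φ m r)
      = -(φ m * ∑ k ∈ Finset.range m, ∫ r in (-1:ℝ)..1, r ^ (2 * k)) := by
    simp only [gAux]
    rw [intervalIntegral.integral_neg, intervalIntegral.integral_const_mul,
      intervalIntegral.integral_finset_sum hint]
  rw [this]
  congr 1
  congr 1
  unfold cseq
  refine Finset.sum_congr rfl fun k _ => ?_
  rw [integral_pow]
  have hodd : Odd (2 * k + 1) := ⟨k, by ring⟩
  rw [hodd.neg_one_pow, one_pow]
  push_cast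
  ring

lemma gAux_continuous (φ : ℕ → ℝ) (m : ℕ) : Continuous (gAux φ m) := by
  unfold gAux
  exact (continuous_const.mul (continuous_finset_sum _ fun k _ => continuous_pow _)).neg

/-- The analytic content of Theorem 6.3 (the `#` operation formula). -/
theorem stmt_9 (φ : ℕ → ℝ)
    (hradius : ∃ x : ℝ, 1 < x ∧ Summable fun m : ℕ => |φ m| * x ^ (2 * m)) :
    IntegrableOn
      (fun r : ℝ => ((∑' m : ℕ, φ m * r ^ (2 * m)) - ∑' m : ℕ, φ m * 1 ^ (2 * m)) / (1 - r ^ 2))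
      (Set.Ioo (-1) 1) ∧
    Summable (fun m : ℕ => |φ (m + 1) * (2 * harmonicNum (2 * m + 1) - harmonicNum m)|) ∧
    ∫ r in Set.Ioo (-1 : ℝ) 1,
        ((∑' m : ℕ, φ m * r ^ (2 * m)) - ∑' m : ℕ, φ m * 1 ^ (2 * m)) / (1 - r ^ 2)
      = -∑' m : ℕ, φ (m + 1) * (2 * harmonicNum (2 * m + 1) - harmonicNum m) := by
  classical
  obtain ⟨x, hx1, hA⟩ := hradius
  have hx0 : (0:ℝ) < x := lt_trans one_pos hx1
  have hx2 : (1:ℝ) < x ^ 2 := by nlinarith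
  have hxpow_one : ∀ m : ℕ, (1:ℝ) ≤ x ^ (2 * m) := fun m => one_le_pow₀ hx1.le
  -- m ≤ (x^2-1)⁻¹ * x^(2m)
  have hxc : ∀ m : ℕ, (m : ℝ) ≤ (x ^ 2 - 1)⁻¹ * x ^ (2 * m) := by
    intro m
    have hb : 1 + (m : ℝ) * (x ^ 2 - 1) ≤ (1 + (x ^ 2 - 1)) ^ m :=
      one_add_mul_le_pow (by nlinarith) m
    have h2 : (1 + (x ^ 2 - 1)) ^ m = x ^ (2 * m) := by
      rw [show (1:ℝ) + (x ^ 2 - 1) = x ^ 2 by ring, ← pow_mul]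
    rw [h2] at hb
    have hpos : (0:ℝ) < x ^ 2 - 1 := by nlinarith
    rw [le_inv_mul_iff₀ hpos]
    nlinarith [Nat.cast_nonneg (α := ℝ) m]
  -- Summable |φ m| * m
  have hB : Summable (fun m : ℕ => |φ m| * m) := by
    refine Summable.of_nonneg_of_le (fun m => by positivity) (fun m => ?_)
      (hA.mul_left (x ^ 2 - 1)⁻¹)
    have := mul_le_mul_of_nonneg_left (hxc m) (abs_nonneg (φ m))
    calc |φ m| * m ≤ |φ m| * ((x ^ 2 - 1)⁻¹ * x ^ (2 * m)) := this
      _ = (x ^ 2 - 1)⁻¹ * (|φ m| * x ^ (2 * m)) := by ring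
  set u : ℕ → ℝ := fun m => |φ m| * m with hu
  -- summability of the power series at |r| ≤ 1
  have hsum : ∀ r : ℝ, |r| ≤ 1 → Summable fun m : ℕ => φ m * r ^ (2 * m) := by
    intro r hr
    refine Summable.of_abs (Summable.of_nonneg_of_le (fun m => abs_nonneg _) (fun m => ?_) hA)
    rw [abs_mul, abs_pow]
    have h1 : |r| ^ (2 * m) ≤ 1 := pow_le_one₀ (abs_nonneg r) hr
    calc |φ m| * |r| ^ (2 * m) ≤ |φ m| * 1 :=
          mul_le_mul_of_nonneg_left h1 (abs_nonneg _)
      _ ≤ |φ m| * x ^ (2 * m) := mul_le_mul_of_nonneg_left (hxpow_one m) (abs_nonneg _)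
  -- bound on gAux
  have hgbound : ∀ (m : ℕ) (r : ℝ), |r| ≤ 1 → ‖gAux φ m r‖ ≤ u m := by
    intro m r hr
    have hS : |∑ k ∈ Finset.range m, r ^ (2 * k)| ≤ (m : ℝ) := by
      calc |∑ k ∈ Finset.range m, r ^ (2 * k)|
          ≤ ∑ k ∈ Finset.range m, |r ^ (2 * k)| := Finset.abs_sum_le_sum_abs _ _
        _ ≤ ∑ _k ∈ Finset.range m, (1:ℝ) := by
            refine Finset.sum_le_sum fun k _ => ?_
            rw [abs_pow]
            exact pow_le_one₀ (abs_nonneg r) hr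
        _ = m := by simp
    rw [Real.norm_eq_abs, gAux, abs_neg, abs_mul]
    exact mul_le_mul_of_nonneg_left hS (abs_nonneg _)
  -- the pointwise identity on Ioo
  have hkey : ∀ r ∈ Set.Ioo (-1 : ℝ) 1,
      ((∑' m : ℕ, φ m * r ^ (2 * m)) - ∑' m : ℕ, φ m * 1 ^ (2 * m)) / (1 - r ^ 2)
        = ∑' m : ℕ, gAux φ m r := by
    intro r hr
    have hr1 : |r| < 1 := abs_lt.2 ⟨hr.1, hr.2⟩
    have hrsq : r ^ 2 < 1 := by
      have := sq_abs r
      nlinarith [abs_nonneg r]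
    have hne : (1 : ℝ) - r ^ 2 ≠ 0 := by linarith
    have h1 := hsum r hr1.le
    have h2 := hsum 1 (by norm_num)
    rw [← Summable.tsum_sub h1 h2]
    have hterm : ∀ m : ℕ, φ m * r ^ (2 * m) - φ m * 1 ^ (2 * m) = gAux φ m r * (1 - r ^ 2) := by
      intro m
      have hgeom : (∑ k ∈ Finset.range m, (r ^ 2) ^ k) * (r ^ 2 - 1) = (r ^ 2) ^ m - 1 :=
        geom_sum_mul _ _
      have hg : (∑ k ∈ Finset.range m, r ^ (2 * k)) = ∑ k ∈ Finset.range m, (r ^ 2) ^ k := by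
        refine Finset.sum_congr rfl fun k _ => ?_
        rw [pow_mul]
      rw [gAux, hg, one_pow, mul_one, pow_mul]
      linear_combination (-(φ m)) * hgeom
    rw [tsum_congr hterm, tsum_mul_right, mul_div_assoc, div_self hne, mul_one]
  -- summability of ‖gAux‖ pointwise
  have hgs : ∀ r : ℝ, |r| ≤ 1 → Summable fun m => ‖gAux φ m r‖ := fun r hr =>
    Summable.of_nonneg_of_le (fun m => norm_nonneg _) (fun m => hgbound m r hr) hB
  -- continuity of the sum G on Icc
  set G : ℝ → ℝ := fun r => ∑' m, gAux φ m r with hG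
  have hcont : ContinuousOn G (Set.Icc (-1 : ℝ) 1) := by
    refine continuousOn_tsum (fun m => (gAux_continuous φ m).continuousOn) hB ?_
    intro m r hr
    exact hgbound m r (abs_le.2 ⟨hr.1, hr.2⟩)
  have hGbdd : ∀ r : ℝ, |r| ≤ 1 → ‖G r‖ ≤ ∑' m, u m := by
    intro r hr
    calc ‖G r‖ ≤ ∑' m, ‖gAux φ m r‖ := norm_tsum_le_tsum_norm (hgs r hr)
      _ ≤ ∑' m, u m := Summable.tsum_le_tsum (fun m => hgbound m r hr) (hgs r hr) hB
  -- integrability of G on Ioo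
  have hGint : IntegrableOn G (Set.Ioo (-1 : ℝ) 1) := by
    refine ⟨((hcont.mono Set.Ioo_subset_Icc_self).aestronglyMeasurable measurableSet_Ioo), ?_⟩
    refine HasFiniteIntegral.restrict_of_bounded (C := ∑' m, u m) ?_ ?_
    · exact measure_Ioo_lt_top
    · refine (ae_restrict_iff' measurableSet_Ioo).2 (Filter.Eventually.of_forall ?_)
      intro r hr
      exact hGbdd r (abs_le.2 ⟨hr.1.le, hr.2.le⟩)
  have hEq : Set.EqOn G
      (fun r : ℝ => ((∑' m : ℕ, φ m * r ^ (2 * m)) - ∑' m : ℕ, φ m * 1 ^ (2 * m)) / (1 - r ^ 2))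
      (Set.Ioo (-1 : ℝ) 1) := fun r hr => (hkey r hr).symm
  refine ⟨hGint.congr_fun hEq measurableSet_Ioo, ?_, ?_⟩
  · -- summability claim
    have hshift : Summable (fun m : ℕ => |φ (m + 1)| * (m + 1)) := by
      have h := (summable_nat_add_iff 1).2 hB
      simp only [hu, Nat.cast_add, Nat.cast_one] at h
      exact h
    refine Summable.of_nonneg_of_le (fun m => abs_nonneg _) (fun m => ?_) (hshift.mul_left 5)
    rw [abs_mul]
    have hH1 : |2 * harmonicNum (2 * m + 1) - harmonicNum m| ≤ 5 * (m + 1) := by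
      have b1 := harmonicNum_le (2 * m + 1)
      have b2 := harmonicNum_le m
      have n1 := harmonicNum_nonneg (2 * m + 1)
      have n2 := harmonicNum_nonneg m
      rw [abs_le]
      push_cast at b1 ⊢
      constructor <;> nlinarith
    calc |φ (m + 1)| * |2 * harmonicNum (2 * m + 1) - harmonicNum m|
        ≤ |φ (m + 1)| * (5 * (m + 1)) := mul_le_mul_of_nonneg_left hH1 (abs_nonneg _)
      _ = 5 * (|φ (m + 1)| * (m + 1)) := by ring
  · -- the integral formula
    have hmeas : ∀ m : ℕ, AEStronglyMeasurable (gAux φ m)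
        (volume.restrict (Set.Ioo (-1 : ℝ) 1)) := by
      intro m
      exact ((gAux_continuous φ m).aestronglyMeasurable).restrict
    have hlint : ∀ m : ℕ, (∫⁻ r in Set.Ioo (-1 : ℝ) 1, ‖gAux φ m r‖₊ ∂volume)
        ≤ ENNReal.ofReal (2 * u m) := by
      intro m
      have hb : ∀ r ∈ Set.Ioo (-1 : ℝ) 1, (‖gAux φ m r‖₊ : ℝ≥0∞) ≤ ENNReal.ofReal (u m) := by
        intro r hr
        rw [← enorm_eq_nnnorm, ← ofReal_norm]
        exact ENNReal.ofReal_le_ofReal (hgbound m r (abs_le.2 ⟨hr.1.le, hr.2.le⟩))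
      calc (∫⁻ r in Set.Ioo (-1 : ℝ) 1, ‖gAux φ m r‖₊ ∂volume)
          ≤ ∫⁻ _r in Set.Ioo (-1 : ℝ) 1, ENNReal.ofReal (u m) ∂volume :=
            setLIntegral_mono measurable_const hb
        _ = ENNReal.ofReal (u m) * volume (Set.Ioo (-1 : ℝ) 1) := setLIntegral_const _ _
        _ = ENNReal.ofReal (u m) * ENNReal.ofReal 2 := by
            rw [Real.volume_Ioo]; norm_num
        _ = ENNReal.ofReal (2 * u m) := by
            rw [← ENNReal.ofReal_mul (by positivity)]
            ring_nf
    have hne_top : (∑' m : ℕ, ∫⁻ r in Set.Ioo (-1 : ℝ) 1, ‖gAux φ m r‖₊ ∂volume) ≠ ⊤ := by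
      refine ne_top_of_le_ne_top ?_ (ENNReal.tsum_le_tsum hlint)
      rw [← ENNReal.ofReal_tsum_of_nonneg (fun m => by positivity) (hB.mul_left 2)]
      exact ENNReal.ofReal_ne_top
    have hswap : (∫ r in Set.Ioo (-1 : ℝ) 1, G r) = ∑' m : ℕ, (∫ r in Set.Ioo (-1 : ℝ) 1, gAux φ m r) :=
      integral_tsum hmeas hne_top
    have hstep1 : (∫ r in Set.Ioo (-1 : ℝ) 1,
        ((∑' m : ℕ, φ m * r ^ (2 * m)) - ∑' m : ℕ, φ m * 1 ^ (2 * m)) / (1 - r ^ 2))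
        = ∫ r in Set.Ioo (-1 : ℝ) 1, G r :=
      setIntegral_congr_fun measurableSet_Ioo hEq.symm
    rw [hstep1, hswap]
    have hint_eq : ∀ m : ℕ, (∫ r in Set.Ioo (-1 : ℝ) 1, gAux φ m r) = -(φ m * cseq m) :=
      integral_gAux φ
    rw [tsum_congr hint_eq]
    -- shift the index
    have hs : Summable fun m : ℕ => -(φ m * cseq m) := by
      refine Summable.neg ?_
      refine Summable.of_abs (Summable.of_nonneg_of_le (fun m => abs_nonneg _) (fun m => ?_)
        (hB.mul_left 2))
      rw [abs_mul]
      have h1 : |cseq m| ≤ 2 * m := by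
        rw [abs_of_nonneg (cseq_nonneg m)]; exact cseq_le m
      calc |φ m| * |cseq m| ≤ |φ m| * (2 * m) := mul_le_mul_of_nonneg_left h1 (abs_nonneg _)
        _ = 2 * (|φ m| * m) := by ring
    rw [Summable.tsum_eq_zero_add hs]
    have h0 : -(φ 0 * cseq 0) = 0 := by simp [cseq]
    rw [h0, zero_add]
    have hcongr : ∀ n : ℕ, -(φ (n + 1) * cseq (n + 1))
        = -(φ (n + 1) * (2 * harmonicNum (2 * n + 1) - harmonicNum n)) := by
      intro n; rw [cseq_succ]
    rw [tsum_congr hcongr, tsum_neg]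
end

section
/- For every real b > 0, the function r ↦ (cos(br) − cos(b))/(1 − r²) (extended by its limits at r = ±1) is integrable on [−1, 1] and ∫_{−1}^1 (cos(br) − cos(b))/(1 − r²) dr = sin(b) · ∫₀^{2b} (sin u)/u du + cos(b) · ∫₀^{2b} (cos u − 1)/u du. -/
/-!
Partial fractions, `1 / (1 - r²) = (1 / (1 + r) + 1 / (1 - r)) / 2`, together with the evenness of
`cos (b r) - cos b`, reduce the integral to `∫_{-1}^1 (cos (b r) - cos b) / (1 + r) dr`. The
substitution `u = b (1 + r)` and `cos (u - b) = cos b cos u + sin b sin u` then give the sine and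
cosine integrals. All integrands are bounded because `cos` is 1-Lipschitz and each numerator
vanishes where its denominator does.
-/

open MeasureTheory Real

lemma abs_div_le_of_abs_le_mul_abs {x y K : ℝ} (hK : 0 ≤ K) (h : |x| ≤ K * |y|) :
    |x / y| ≤ K := by
  rcases eq_or_ne y 0 with rfl | hy
  · simpa using hK
  · rwa [abs_div, div_le_iff₀ (abs_pos.mpr hy)]

lemma integrableOn_div_of_abs_le_mul_abs {α : Type*} [MeasurableSpace α] {μ : Measure α}
    {s : Set α} {f d : α → ℝ} {K : ℝ} (hf : Measurable f) (hd : Measurable d) (hs : μ s ≠ ⊤)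
    (hK : 0 ≤ K) (h : ∀ x, |f x| ≤ K * |d x|) : IntegrableOn (fun x => f x / d x) s μ :=
  Measure.integrableOn_of_bounded hs (hf.div hd).aestronglyMeasurable
    (.of_forall fun x => abs_div_le_of_abs_le_mul_abs hK (h x))

lemma div_one_sub_sq_eq_average {f : ℝ → ℝ} (hf : ∀ r, f (-r) = f r) (h1 : f 1 = 0) (r : ℝ) :
    f r / (1 - r ^ 2) = (f r / (1 + r) + f (-r) / (1 + -r)) / 2 := by
  -- at `r = ±1` both sides are `0`, as `f` vanishes there and `x / 0 = 0`
  have hm1 : f (-1) = 0 := by rw [hf, h1]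
  rcases eq_or_ne r 1 with rfl | hr1
  · simp [h1, hm1]
  rcases eq_or_ne r (-1) with rfl | hr2
  · simp [h1, hm1]
  have : 1 + r ≠ 0 := fun h => hr2 (by linarith)
  have : 1 + -r ≠ 0 := fun h => hr1 (by linarith)
  have : 1 - r ^ 2 ≠ 0 := by
    rw [show 1 - r ^ 2 = (1 + r) * (1 + -r) by ring]; positivity
  rw [hf]
  field_simp
  ring

lemma IntervalIntegrable.comp_neg_symm {g : ℝ → ℝ} {a : ℝ}
    (hg : IntervalIntegrable g volume (-a) a) :
    IntervalIntegrable (fun r => g (-r)) volume (-a) a := by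
  simpa using ((IntervalIntegrable.iff_comp_neg (by finiteness)).1 hg).symm

lemma intervalIntegrable_div_one_sub_sq_of_even {f : ℝ → ℝ} (hf : ∀ r, f (-r) = f r)
    (h1 : f 1 = 0) (hint : IntervalIntegrable (fun r => f r / (1 + r)) volume (-1) 1) :
    IntervalIntegrable (fun r => f r / (1 - r ^ 2)) volume (-1) 1 := by
  simp_rw [div_one_sub_sq_eq_average hf h1]
  exact (hint.add hint.comp_neg_symm).div_const 2

lemma integral_div_one_sub_sq_of_even {f : ℝ → ℝ} (hf : ∀ r, f (-r) = f r) (h1 : f 1 = 0)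
    (hint : IntervalIntegrable (fun r => f r / (1 + r)) volume (-1) 1) :
    ∫ r in (-1)..1, f r / (1 - r ^ 2) = ∫ r in (-1)..1, f r / (1 + r) := by
  have hint_neg : IntervalIntegrable (fun r => f (-r) / (1 + -r)) volume (-1) 1 :=
    hint.comp_neg_symm
  simp_rw [div_one_sub_sq_eq_average hf h1]
  rw [intervalIntegral.integral_div, intervalIntegral.integral_add hint hint_neg,
    intervalIntegral.integral_comp_neg (fun r => f r / (1 + r))]
  norm_num

lemma abs_cos_mul_sub_cos_le (b r : ℝ) : |cos (b * r) - cos b| ≤ |b| * |1 + r| := by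
  calc |cos (b * r) - cos b| = |cos (b * r) - cos (-b)| := by rw [cos_neg]
    _ ≤ |b * r - -b| := abs_cos_sub_cos_le _ _
    _ = |b| * |1 + r| := by rw [← abs_mul]; ring_nf

lemma intervalIntegrable_cos_mul_sub_cos_div_one_add (b a c : ℝ) :
    IntervalIntegrable (fun r => (cos (b * r) - cos b) / (1 + r)) volume a c :=
  (integrableOn_div_of_abs_le_mul_abs (by fun_prop) (by fun_prop) isCompact_uIcc.measure_ne_top
    (abs_nonneg b) (abs_cos_mul_sub_cos_le b)).intervalIntegrable

lemma integral_cos_mul_sub_cos_div_one_add (b : ℝ) :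
    ∫ r in (-1)..1, (cos (b * r) - cos b) / (1 + r) =
      ∫ u in 0..2 * b, (cos (u - b) - cos b) / u := by
  rcases eq_or_ne b 0 with rfl | hb
  · simp
  have := intervalIntegral.smul_integral_comp_mul_add (a := -1) (b := 1)
    (fun u => (cos (u - b) - cos b) / u) b b
  simp only [smul_eq_mul, ← intervalIntegral.integral_const_mul] at this
  convert this using 1
  · refine intervalIntegral.integral_congr fun r _ => ?_
    simp only [add_sub_cancel_right]
    rw [show b * r + b = b * (1 + r) by ring, ← mul_div_assoc, mul_div_mul_left _ _ hb]
  · ring_nf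

lemma cos_sub_sub_cos (u b : ℝ) : cos (u - b) - cos b = sin b * sin u + cos b * (cos u - 1) := by
  rw [cos_sub]; ring

lemma intervalIntegrable_sin_div_self (a b : ℝ) :
    IntervalIntegrable (fun u => sin u / u) volume a b :=
  (integrableOn_div_of_abs_le_mul_abs (by fun_prop) measurable_id isCompact_uIcc.measure_ne_top
    zero_le_one (fun u => by simpa using abs_sin_le_abs)).intervalIntegrable

lemma intervalIntegrable_cos_sub_one_div_self (a b : ℝ) :
    IntervalIntegrable (fun u => (cos u - 1) / u) volume a b :=
  (integrableOn_div_of_abs_le_mul_abs (by fun_prop) measurable_id isCompact_uIcc.measure_ne_top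
    zero_le_one (fun u => by simpa using abs_cos_sub_cos_le u 0)).intervalIntegrable

/-- The key step in the proof of Theorem 9.3, expressed via the sine and cosine integrals. -/
theorem stmt_12 (b : ℝ) (hb : 0 < b) :
    IntegrableOn (fun r : ℝ => (Real.cos (b * r) - Real.cos b) / (1 - r ^ 2))
      (Set.Icc (-1) 1) ∧
    ∫ r in Set.Icc (-1 : ℝ) 1, (Real.cos (b * r) - Real.cos b) / (1 - r ^ 2)
      = Real.sin b * (∫ u in Set.Ioc (0 : ℝ) (2 * b), Real.sin u / u)
        + Real.cos b * ∫ u in Set.Ioc (0 : ℝ) (2 * b), (Real.cos u - 1) / u := by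
  have heven : ∀ r, cos (b * -r) - cos b = cos (b * r) - cos b := by simp
  have hint : IntervalIntegrable (fun r => (cos (b * r) - cos b) / (1 + r)) volume (-1) 1 :=
    intervalIntegrable_cos_mul_sub_cos_div_one_add b (-1) 1
  constructor
  · exact (intervalIntegrable_iff_integrableOn_Icc_of_le (by norm_num)).1
      (intervalIntegrable_div_one_sub_sq_of_even (f := fun r => cos (b * r) - cos b) heven
        (by simp) hint)
  · rw [integral_Icc_eq_integral_Ioc, ← intervalIntegral.integral_of_le (by norm_num),
      ← intervalIntegral.integral_of_le (by positivity),
      ← intervalIntegral.integral_of_le (by positivity),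
      integral_div_one_sub_sq_of_even (f := fun r => cos (b * r) - cos b) heven (by simp) hint,
      integral_cos_mul_sub_cos_div_one_add]
    simp_rw [cos_sub_sub_cos, add_div, mul_div_assoc]
    rw [intervalIntegral.integral_add ((intervalIntegrable_sin_div_self _ _).const_mul _)
        ((intervalIntegrable_cos_sub_one_div_self _ _).const_mul _),
      intervalIntegral.integral_const_mul, intervalIntegral.integral_const_mul]
end

section
/- Fix t ∈ (0, 2π). The function f(r) = [ r/sin(tr/2) − 1/sin(t/2) ] / (t(1 − r²)) defined for r ∈ (−1, 1), r ≠ 0 (with the removable singularity at r = 0 filled by its limit) extends to a continuously differentiable function on the closed interval [−1, 1], and there exists C > 0 such that for all integers ℓ ≥ 1: | ∫_{−1}^1 f(r) · cos((ℓ+1)tr/2) dr | ≤ C/(ℓ+1). -/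
open MeasureTheory Real

/-
Writing `r / sin (t r / 2) = (2 / t) / sinc (t r / 2)`, the function is
`-(2 / t²) (ψ r - ψ 1) / ((r - 1)(r + 1))` with `ψ r = 1 / sinc (t r / 2)`. Since `|t r / 2| < π` on
`[-1, 1]`, `ψ` is analytic there, and `ψ 1 = ψ (-1)` by evenness, so both divisions remove their
singularities and the result is analytic, in particular `C¹`, on `[-1, 1]`. The decay is then the
usual integration by parts: for `g ∈ C¹[a, b]`,
`ω ∫ g(x) cos(ω x) dx = [g sin(ω ·)]ₐᵇ - ∫ g'(x) sin(ω x) dx` is bounded independently of `ω`.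
-/

section Dslope

variable {𝕜 E : Type*} [NontriviallyNormedField 𝕜] [NormedAddCommGroup E] [NormedSpace 𝕜 E]
  {f : 𝕜 → E} {a x : 𝕜}

theorem AnalyticAt.dslope (hf : AnalyticAt 𝕜 f x) : AnalyticAt 𝕜 (dslope f a) x := by
  rcases eq_or_ne x a with rfl | hxa
  · obtain ⟨p, hp⟩ := hf
    exact ⟨p.fslope, hp.has_fpower_series_dslope_fslope⟩
  · have hslope : AnalyticAt 𝕜 (fun y => (y - a)⁻¹ • (f y - f a)) x :=
      ((analyticAt_id.sub analyticAt_const).inv (sub_ne_zero.2 hxa)).smul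
        (hf.sub analyticAt_const)
    refine hslope.congr ?_
    filter_upwards [eventually_ne_nhds hxa] with y hy
    rw [dslope_of_ne _ hy, slope_def_module]

end Dslope

namespace Real

theorem analyticAt_sinc {x : ℝ} : AnalyticAt ℝ sinc x :=
  sinc_eq_dslope ▸ analyticAt_sin.dslope

theorem sinc_pos_of_abs_lt_pi {x : ℝ} (hx : |x| < π) : 0 < sinc x := by
  have hpos : ∀ y : ℝ, 0 < y → y < π → 0 < sinc y := fun y hy hyπ => by
    rw [sinc_of_ne_zero hy.ne']
    exact div_pos (sin_pos_of_pos_of_lt_pi hy hyπ) hy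
  rcases lt_trichotomy x 0 with hx0 | rfl | hx0
  · rw [← sinc_neg]
    exact hpos (-x) (neg_pos.2 hx0) (by rwa [abs_of_neg hx0] at hx)
  · simp
  · exact hpos x hx0 (by rwa [abs_of_pos hx0] at hx)

end Real

section IntegrationByParts

variable {g : ℝ → ℝ} {a b : ℝ}

theorem mul_intervalIntegral_mul_cos_eq (hab : a < b) (hg : ContDiffOn ℝ 1 g (Set.Icc a b))
    (ω : ℝ) :
    ω * ∫ x in a..b, g x * cos (ω * x) = g b * sin (ω * b) - g a * sin (ω * a) -
      ∫ x in a..b, derivWithin g (Set.Icc a b) x * sin (ω * x) := by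
  have hIcc : Set.uIcc a b = Set.Icc a b := Set.uIcc_of_le hab.le
  rw [← intervalIntegral.integral_const_mul]
  simp_rw [mul_left_comm ω]
  refine intervalIntegral.integral_mul_deriv_eq_deriv_mul_of_hasDerivWithinAt
    (v := fun x => sin (ω * x)) (v' := fun x => ω * cos (ω * x)) (fun x hx => ?_)
    (fun x _ => ?_) ?_ ?_
  · rw [hIcc] at hx ⊢
    exact ((hg.differentiableOn one_ne_zero) x hx).hasDerivWithinAt
  · simpa [mul_comm] using ((hasDerivAt_mul_const ω).sin).hasDerivWithinAt
  · rw [intervalIntegrable_iff_integrableOn_Icc_of_le hab.le]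
    exact (hg.continuousOn_derivWithin (uniqueDiffOn_Icc hab) le_rfl).integrableOn_Icc
  · exact (by fun_prop : Continuous fun x => ω * cos (ω * x)).intervalIntegrable _ _

theorem exists_abs_intervalIntegral_mul_cos_le (hab : a < b)
    (hg : ContDiffOn ℝ 1 g (Set.Icc a b)) :
    ∃ C, 0 < C ∧ ∀ ω > 0, |∫ x in a..b, g x * cos (ω * x)| ≤ C / ω := by
  set g' := derivWithin g (Set.Icc a b)
  obtain ⟨M, hM⟩ := isCompact_Icc.exists_bound_of_continuousOn
    (hg.continuousOn_derivWithin (uniqueDiffOn_Icc hab) le_rfl)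
  have hM0 : 0 ≤ M := (norm_nonneg (g' a)).trans (hM a (Set.left_mem_Icc.2 hab.le))
  refine ⟨|g b| + |g a| + M * (b - a) + 1, by positivity, fun ω hω => ?_⟩
  have hrest : |∫ x in a..b, g' x * sin (ω * x)| ≤ M * (b - a) := by
    have := intervalIntegral.norm_integral_le_of_norm_le_const (C := M)
      (f := fun x => g' x * sin (ω * x)) (a := a) (b := b) fun x hx => by
        rw [norm_mul, ← mul_one M]
        gcongr
        · exact hM x (Set.uIcc_of_le hab.le ▸ Set.uIoc_subset_uIcc hx)
        · exact abs_sin_le_one _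
    rwa [abs_of_pos (sub_pos.2 hab)] at this
  have hsin : ∀ y z : ℝ, |y * sin z| ≤ |y| := fun y z => by
    rw [abs_mul]; exact mul_le_of_le_one_right (abs_nonneg y) (abs_sin_le_one z)
  rw [le_div_iff₀ hω, ← abs_of_pos hω, ← abs_mul, mul_comm, abs_of_pos hω,
    mul_intervalIntegral_mul_cos_eq hab hg]
  linarith [abs_sub (g b * sin (ω * b) - g a * sin (ω * a)) (∫ x in a..b, g' x * sin (ω * x)),
    abs_sub (g b * sin (ω * b)) (g a * sin (ω * a)), hsin (g b) (ω * b), hsin (g a) (ω * a)]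

end IntegrationByParts

/-- The two `dslope`s are the divisions by `r - 1` and `r + 1` with the singularities filled in. -/
noncomputable def sinKernel (t : ℝ) : ℝ → ℝ :=
  fun r => -(2 / t ^ 2) * dslope (dslope (fun r => (sinc (t * r / 2))⁻¹) 1) (-1) r

theorem sinKernel_eq {t r : ℝ} (ht : t ≠ 0) (hr0 : r ≠ 0) (hr1 : r ≠ 1) (hr2 : r ≠ -1) :
    sinKernel t r = (r / sin (t * r / 2) - 1 / sin (t / 2)) / (t * (1 - r ^ 2)) := by
  have : r - 1 ≠ 0 := sub_ne_zero.2 hr1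
  have : r + 1 ≠ 0 := by rwa [← sub_neg_eq_add, sub_ne_zero]
  have hinv : ∀ y ≠ 0, (sinc (t * y / 2))⁻¹ = t * y / 2 / sin (t * y / 2) := fun y hy => by
    rw [sinc_of_ne_zero (by positivity), inv_div]
  have hend : dslope (fun r => (sinc (t * r / 2))⁻¹) 1 (-1) = 0 := by
    rw [dslope_of_ne _ (by norm_num), slope_def_field, show t * -1 / 2 = -(t * 1 / 2) by ring,
      sinc_neg, sub_self, zero_div]
  rw [sinKernel, dslope_of_ne _ hr2, slope_def_field, hend, dslope_of_ne _ hr1,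
    slope_def_field, hinv r hr0, hinv 1 one_ne_zero, show 1 - r ^ 2 = -((r - 1) * (r + 1)) by ring]
  field_simp
  ring

theorem analyticOnNhd_sinKernel {t : ℝ} (ht : t ∈ Set.Ioo 0 (2 * π)) :
    AnalyticOnNhd ℝ (sinKernel t) (Set.Icc (-1) 1) := fun r hr => by
  have hsinc : 0 < sinc (t * r / 2) := by
    refine sinc_pos_of_abs_lt_pi ?_
    rw [abs_div, abs_mul, abs_of_pos ht.1, abs_two]
    have := abs_le.2 hr
    nlinarith [ht.2, ht.1]
  have hψ : AnalyticAt ℝ (fun r => (sinc (t * r / 2))⁻¹) r :=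
    (analyticAt_sinc.comp (by fun_prop : AnalyticAt ℝ (fun r => t * r / 2) r)).inv hsinc.ne'
  exact analyticAt_const.mul hψ.dslope.dslope

theorem setIntegral_Ioo_eq_intervalIntegral_sinKernel {t : ℝ} (ht : t ≠ 0) (φ : ℝ → ℝ) :
    ∫ r in Set.Ioo (-1 : ℝ) 1, (r / sin (t * r / 2) - 1 / sin (t / 2)) / (t * (1 - r ^ 2)) * φ r =
      ∫ r in (-1 : ℝ)..1, sinKernel t r * φ r := by
  rw [intervalIntegral.integral_of_le (by norm_num), integral_Ioc_eq_integral_Ioo]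
  refine setIntegral_congr_ae measurableSet_Ioo ?_
  filter_upwards [Measure.ae_ne volume 0] with r hr0 hr
  rw [sinKernel_eq ht hr0 hr.2.ne hr.1.ne']

/-- The smoothness and decay claim (partial integration) from the proof of Theorem 9.3. -/
theorem stmt_13 (t : ℝ) (ht : t ∈ Set.Ioo 0 (2 * π)) :
    (∃ g : ℝ → ℝ, ContDiffOn ℝ 1 g (Set.Icc (-1) 1) ∧
      ∀ r ∈ Set.Ioo (-1 : ℝ) 1, r ≠ 0 →
        g r = (r / Real.sin (t * r / 2) - 1 / Real.sin (t / 2)) / (t * (1 - r ^ 2))) ∧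
    ∃ C : ℝ, 0 < C ∧ ∀ ℓ : ℕ, 1 ≤ ℓ →
      |∫ r in Set.Ioo (-1 : ℝ) 1,
          (r / Real.sin (t * r / 2) - 1 / Real.sin (t / 2)) / (t * (1 - r ^ 2))
            * Real.cos (((ℓ : ℝ) + 1) * t * r / 2)|
        ≤ C / ((ℓ : ℝ) + 1) := by
  have ht0 : t ≠ 0 := ht.1.ne'
  have hC1 : ContDiffOn ℝ 1 (sinKernel t) (Set.Icc (-1) 1) :=
    (analyticOnNhd_sinKernel ht).contDiffOn (uniqueDiffOn_Icc (by norm_num))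
  refine ⟨⟨sinKernel t, hC1, fun r hr hr0 => sinKernel_eq ht0 hr0 hr.2.ne hr.1.ne'⟩, ?_⟩
  obtain ⟨C, hC, hdecay⟩ := exists_abs_intervalIntegral_mul_cos_le (by norm_num) hC1
  refine ⟨2 * C / t, by have := ht.1; positivity, fun ℓ _ => ?_⟩
  have hω : 0 < ((ℓ : ℝ) + 1) * t / 2 := by have := ht.1; positivity
  rw [setIntegral_Ioo_eq_intervalIntegral_sinKernel ht0]
  calc _ = |∫ r in (-1 : ℝ)..1, sinKernel t r * cos (((ℓ : ℝ) + 1) * t / 2 * r)| := by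
        congr 2
        funext r
        rw [mul_div_right_comm _ r]
    _ ≤ C / (((ℓ : ℝ) + 1) * t / 2) := hdecay _ hω
    _ = 2 * C / t / ((ℓ : ℝ) + 1) := by field_simp
end

section
/- Let s ≥ 0, a > 0, c > 0 and y, y₀ > 0 be real numbers with |y − y₀| ≤ c·y₀² and c·y₀ ≤ 1/2. Then | y^{−s} e^{−y/(2a)} − y₀^{−s} e^{−y₀/(2a)} | ≤ c · e^{−y₀/(4a)} · ( 2^{s+1} s · y₀^{1−s} + 2^{s−1} · y₀^{2−s}/a ). -/
open Real

/-- The mean-value-theorem estimate (11) from the proof of Proposition 5.4. -/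
theorem stmt_15 (s a c y y₀ : ℝ) (hs : 0 ≤ s) (ha : 0 < a) (hc : 0 < c)
    (hy : 0 < y) (hy₀ : 0 < y₀) (hclose : |y - y₀| ≤ c * y₀ ^ 2) (hsmall : c * y₀ ≤ 1 / 2) :
    |y ^ (-s) * Real.exp (-y / (2 * a)) - y₀ ^ (-s) * Real.exp (-y₀ / (2 * a))|
      ≤ c * Real.exp (-y₀ / (4 * a))
        * (2 ^ (s + 1) * s * y₀ ^ (1 - s) + 2 ^ (s - 1) * y₀ ^ (2 - s) / a) := by
  have hy2 : c * y₀ ^ 2 ≤ y₀ / 2 := by nlinarith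
  set S : Set ℝ := Set.Icc (y₀ / 2) (3 * y₀ / 2) with hS
  have habs := abs_le.1 hclose
  have hyS : y ∈ S := ⟨by linarith [habs.1], by linarith [habs.2]⟩
  have hy₀S : y₀ ∈ S := ⟨by linarith, by linarith⟩
  set F' : ℝ → ℝ := fun t =>
    (-s * t ^ (-s - 1)) * Real.exp (-t / (2 * a))
      + t ^ (-s) * (Real.exp (-t / (2 * a)) * (-(1 / (2 * a)))) with hF'
  have hderiv : ∀ t ∈ S, HasDerivWithinAt
      (fun t : ℝ => t ^ (-s) * Real.exp (-t / (2 * a))) (F' t) S t := by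
    intro t ht
    have ht0 : 0 < t := lt_of_lt_of_le (by linarith [ht.1] : (0:ℝ) < y₀ / 2) ht.1
    have h1 : HasDerivAt (fun t : ℝ => t ^ (-s)) (-s * t ^ (-s - 1)) t :=
      Real.hasDerivAt_rpow_const (Or.inl ht0.ne')
    have h2 : HasDerivAt (fun t : ℝ => Real.exp (-t / (2 * a)))
        (Real.exp (-t / (2 * a)) * (-(1 / (2 * a)))) t := by
      have : HasDerivAt (fun t : ℝ => -t / (2 * a)) (-(1 / (2 * a))) t := by
        simpa [neg_div] using ((hasDerivAt_id t).neg.div_const (2 * a))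
      simpa [mul_comm] using this.exp
    exact ((h1.mul h2)).hasDerivWithinAt
  set C : ℝ := Real.exp (-y₀ / (4 * a))
      * (2 ^ (s + 1) * s * y₀ ^ (-s - 1) + 2 ^ (s - 1) * y₀ ^ (-s) / a) with hC
  have hbound : ∀ t ∈ S, ‖F' t‖ ≤ C := by
    intro t ht
    have ht1 : y₀ / 2 ≤ t := ht.1
    have ht2 : t ≤ 3 * y₀ / 2 := ht.2
    have ht0 : 0 < t := lt_of_lt_of_le (by linarith) ht1
    have hE : Real.exp (-t / (2 * a)) ≤ Real.exp (-y₀ / (4 * a)) := by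
      apply Real.exp_le_exp.2
      rw [div_le_div_iff₀ (by linarith) (by linarith)]
      nlinarith
    have hpos2 : (0:ℝ) < y₀ / 2 := by linarith
    have hts1 : t ^ (-s - 1) ≤ (y₀ / 2) ^ (-s - 1) :=
      Real.rpow_le_rpow_of_nonpos hpos2 ht1 (by linarith)
    have hts2 : t ^ (-s) ≤ (y₀ / 2) ^ (-s) :=
      Real.rpow_le_rpow_of_nonpos hpos2 ht1 (by linarith)
    have heq1 : (y₀ / 2 : ℝ) ^ (-s - 1) = 2 ^ (s + 1) * y₀ ^ (-s - 1) := by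
      rw [Real.div_rpow hy₀.le (by norm_num),
        show (-s - 1) = -(s + 1) by ring,
        Real.rpow_neg (by norm_num : (0:ℝ) ≤ 2), div_eq_mul_inv, inv_inv,
        Real.rpow_neg hy₀.le]
      ring
    have heq2 : (y₀ / 2 : ℝ) ^ (-s) = 2 ^ s * y₀ ^ (-s) := by
      rw [Real.div_rpow hy₀.le (by norm_num),
        Real.rpow_neg (by norm_num : (0:ℝ) ≤ 2), div_eq_mul_inv, inv_inv]
      ring
    have hEpos : 0 < Real.exp (-t / (2 * a)) := Real.exp_pos _
    have hE0 : 0 < Real.exp (-y₀ / (4 * a)) := Real.exp_pos _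
    have htneg : 0 < t ^ (-s - 1) := Real.rpow_pos_of_pos ht0 _
    have htneg2 : 0 < t ^ (-s) := Real.rpow_pos_of_pos ht0 _
    have h2s : (2:ℝ) ^ (s - 1) = 2 ^ s / 2 := by
      rw [Real.rpow_sub (by norm_num), Real.rpow_one]
    have hterm1 : s * t ^ (-s - 1) * Real.exp (-t / (2 * a))
        ≤ Real.exp (-y₀ / (4 * a)) * (2 ^ (s + 1) * s * y₀ ^ (-s - 1)) := by
      have : s * t ^ (-s - 1) ≤ 2 ^ (s + 1) * s * y₀ ^ (-s - 1) := by
        calc s * t ^ (-s - 1) ≤ s * ((y₀ / 2) ^ (-s - 1)) :=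
              mul_le_mul_of_nonneg_left hts1 hs
          _ = 2 ^ (s + 1) * s * y₀ ^ (-s - 1) := by rw [heq1]; ring
      calc s * t ^ (-s - 1) * Real.exp (-t / (2 * a))
          ≤ (2 ^ (s + 1) * s * y₀ ^ (-s - 1)) * Real.exp (-y₀ / (4 * a)) := by
            apply mul_le_mul this hE hEpos.le
            positivity
        _ = _ := by ring
    have hterm2 : t ^ (-s) * (Real.exp (-t / (2 * a)) * (1 / (2 * a)))
        ≤ Real.exp (-y₀ / (4 * a)) * (2 ^ (s - 1) * y₀ ^ (-s) / a) := by
      have h1 : t ^ (-s) * (1 / (2 * a)) ≤ 2 ^ (s - 1) * y₀ ^ (-s) / a := by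
        rw [h2s]
        have h3 : t ^ (-s) ≤ 2 ^ s * y₀ ^ (-s) := heq2 ▸ hts2
        calc t ^ (-s) * (1 / (2 * a)) = t ^ (-s) / (2 * a) := by ring
          _ ≤ (2 ^ s * y₀ ^ (-s)) / (2 * a) :=
              (div_le_div_iff_of_pos_right (by positivity)).2 h3
          _ = 2 ^ s / 2 * y₀ ^ (-s) / a := by ring
      calc t ^ (-s) * (Real.exp (-t / (2 * a)) * (1 / (2 * a)))
          = (t ^ (-s) * (1 / (2 * a))) * Real.exp (-t / (2 * a)) := by ring
        _ ≤ (2 ^ (s - 1) * y₀ ^ (-s) / a) * Real.exp (-y₀ / (4 * a)) := by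
            apply mul_le_mul h1 hE hEpos.le
            positivity
        _ = _ := by ring
    have : |F' t| ≤ s * t ^ (-s - 1) * Real.exp (-t / (2 * a))
        + t ^ (-s) * (Real.exp (-t / (2 * a)) * (1 / (2 * a))) := by
      rw [hF']
      calc |(-s * t ^ (-s - 1)) * Real.exp (-t / (2 * a))
          + t ^ (-s) * (Real.exp (-t / (2 * a)) * (-(1 / (2 * a))))|
          ≤ |(-s * t ^ (-s - 1)) * Real.exp (-t / (2 * a))|
            + |t ^ (-s) * (Real.exp (-t / (2 * a)) * (-(1 / (2 * a))))| := abs_add_le _ _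
        _ = s * t ^ (-s - 1) * Real.exp (-t / (2 * a))
            + t ^ (-s) * (Real.exp (-t / (2 * a)) * (1 / (2 * a))) := by
            rw [abs_mul, abs_mul, abs_mul, abs_mul, abs_neg, abs_neg,
              abs_of_nonneg hs, abs_of_nonneg hEpos.le, abs_of_nonneg htneg.le,
              abs_of_nonneg htneg2.le,
              abs_of_nonneg (by positivity : (0:ℝ) ≤ 1 / (2 * a))]
    rw [Real.norm_eq_abs]
    calc |F' t| ≤ _ := this
      _ ≤ C := by rw [hC, mul_add]; exact add_le_add hterm1 hterm2
  have hmvt := (convex_Icc (y₀ / 2) (3 * y₀ / 2)).norm_image_sub_le_of_norm_hasDerivWithin_le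
    hderiv hbound hy₀S hyS
  rw [Real.norm_eq_abs, Real.norm_eq_abs] at hmvt
  have hCpos : 0 ≤ C := by
    rw [hC]; positivity
  have hfinal : C * |y - y₀| ≤ C * (c * y₀ ^ 2) := mul_le_mul_of_nonneg_left hclose hCpos
  have hrw : C * (c * y₀ ^ 2) = c * Real.exp (-y₀ / (4 * a))
      * (2 ^ (s + 1) * s * y₀ ^ (1 - s) + 2 ^ (s - 1) * y₀ ^ (2 - s) / a) := by
    rw [hC]
    have e1 : y₀ ^ (1 - s) = y₀ ^ (-s - 1) * y₀ ^ 2 := by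
      rw [← Real.rpow_natCast y₀ 2, ← Real.rpow_add hy₀]
      congr 1
      push_cast; ring
    have e2 : y₀ ^ (2 - s) = y₀ ^ (-s) * y₀ ^ 2 := by
      rw [← Real.rpow_natCast y₀ 2, ← Real.rpow_add hy₀]
      congr 1
      push_cast; ring
    rw [e1, e2]; ring
  linarith [le_trans hmvt hfinal]
end

section
/- Let n ≥ 1 and 0 ≤ s ≤ n be integers, set m := n − s, and let c' > 0. Then there exist constants C > 0 and a₀ > 0 such that for all 0 < a < a₀: ∫_{{y ∈ ℝ^{2n} : √(2a) − c'·a^{3/2} ≤ ‖y‖ ≤ √(2a) + c'·a^{3/2}}} a^{−m} ‖y‖^{−2s} dλ(y) ≤ C·a. -/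
open MeasureTheory Metric Set Module
open scoped ENNReal

/-!
Write the annulus as `r₁ ≤ ‖y‖ ≤ r₂` with `r₁, r₂ = ρ ∓ κρ`, `ρ = √(2a)` and `κ = c' a / √2`.
On it `‖y‖² ≥ a / 2`, so the integrand is at most `2 ^ s a⁻ⁿ`. Its volume is `r₂ᵈ - r₁ᵈ` times
that of the unit ball, and the mean value bound `(r₂ᵈ - r₁ᵈ) r₁ ≤ d r₂ᵈ (r₂ - r₁)` makes this
`O(κ ρᵈ) = O(aⁿ⁺¹)` in dimension `d = 2n`.
-/

theorem pow_sub_pow_mul_le {x y : ℝ} (k : ℕ) (hy : 0 ≤ y) (hyx : y ≤ x) :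
    (x ^ k - y ^ k) * y ≤ k * x ^ k * (x - y) := by
  induction k with
  | zero => simp
  | succ k ih =>
    have hx : 0 ≤ x := hy.trans hyx
    have hyk : y ^ k * y ≤ x ^ k * x := by gcongr
    calc (x ^ (k + 1) - y ^ (k + 1)) * y
        = x * ((x ^ k - y ^ k) * y) + (x - y) * (y ^ k * y) := by ring
      _ ≤ x * (k * x ^ k * (x - y)) + (x - y) * (x ^ k * x) := by gcongr
      _ = (k + 1 : ℕ) * x ^ (k + 1) * (x - y) := by push_cast; ring

theorem inv_pow_mul_inv_pow_le_of_half_le {a x : ℝ} (ha : 0 < a) (hx : a / 2 ≤ x) (m s : ℕ) :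
    (a ^ m)⁻¹ * (x ^ s)⁻¹ ≤ 2 ^ s * (a ^ (m + s))⁻¹ := by
  calc (a ^ m)⁻¹ * (x ^ s)⁻¹ ≤ (a ^ m)⁻¹ * ((a / 2) ^ s)⁻¹ := by gcongr
    _ = 2 ^ s * (a ^ (m + s))⁻¹ := by rw [div_pow, pow_add]; field_simp

theorem rpow_three_halves_eq {a : ℝ} (ha : 0 ≤ a) :
    a ^ ((3 : ℝ) / 2) = a / √2 * √(2 * a) := by
  rw [show (3 : ℝ) / 2 = 1 + 1 / 2 by norm_num, Real.rpow_add' ha (by norm_num), Real.rpow_one,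
    ← Real.sqrt_eq_rpow, Real.sqrt_mul zero_le_two]
  field_simp

namespace MeasureTheory.Measure

variable {E : Type*} [NormedAddCommGroup E] [NormedSpace ℝ E] [MeasurableSpace E] [BorelSpace E]
  [FiniteDimensional ℝ E] (μ : Measure E) [μ.IsAddHaarMeasure]

theorem addHaar_annulus {r₁ r₂ : ℝ} (h₁ : 0 < r₁) (h₁₂ : r₁ ≤ r₂) :
    μ {y : E | r₁ ≤ ‖y‖ ∧ ‖y‖ ≤ r₂} =
      ENNReal.ofReal (r₂ ^ finrank ℝ E - r₁ ^ finrank ℝ E) * μ (ball 0 1) := by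
  have hS : {y : E | r₁ ≤ ‖y‖ ∧ ‖y‖ ≤ r₂} = closedBall 0 r₂ \ ball 0 r₁ := by
    ext y; simp [and_comm]
  rw [hS, measure_sdiff (ball_subset_closedBall.trans (closedBall_subset_closedBall h₁₂))
      measurableSet_ball.nullMeasurableSet measure_ball_lt_top.ne,
    addHaar_closedBall μ _ (h₁.le.trans h₁₂), addHaar_ball_of_pos μ _ h₁,
    ← ENNReal.sub_mul (fun _ _ => measure_ball_lt_top.ne),
    ENNReal.ofReal_sub _ (by positivity)]

theorem addHaar_thin_annulus_le {ρ κ : ℝ} (hρ : 0 < ρ) (hκ : 0 ≤ κ) (hκ' : κ ≤ 1 / 2) :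
    μ {y : E | ρ - κ * ρ ≤ ‖y‖ ∧ ‖y‖ ≤ ρ + κ * ρ} ≤
      ENNReal.ofReal (4 * finrank ℝ E * κ * (2 * ρ) ^ finrank ℝ E) * μ (ball 0 1) := by
  set d := finrank ℝ E
  have h₁ : ρ / 2 ≤ ρ - κ * ρ := by nlinarith
  have h₁₂ : ρ - κ * ρ ≤ ρ + κ * ρ := by nlinarith
  rw [addHaar_annulus μ (by linarith) h₁₂]
  gcongr ENNReal.ofReal ?_ * _
  have hΔ : 0 ≤ (ρ + κ * ρ) ^ d - (ρ - κ * ρ) ^ d := sub_nonneg.2 (by gcongr; linarith)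
  have hmv : ((ρ + κ * ρ) ^ d - (ρ - κ * ρ) ^ d) * (ρ / 2) ≤ d * (2 * ρ) ^ d * (2 * κ * ρ) :=
    calc _ ≤ ((ρ + κ * ρ) ^ d - (ρ - κ * ρ) ^ d) * (ρ - κ * ρ) := by gcongr
      _ ≤ d * (ρ + κ * ρ) ^ d * (2 * κ * ρ) := by
          convert pow_sub_pow_mul_le d (by linarith) h₁₂ using 2; ring
      _ ≤ d * (2 * ρ) ^ d * (2 * κ * ρ) := by gcongr; nlinarith
  nlinarith

theorem setLIntegral_thin_annulus_le {ρ κ B : ℝ} (hρ : 0 < ρ) (hκ : 0 ≤ κ) (hκ' : κ ≤ 1 / 2)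
    {f : E → ℝ≥0∞} (hf : ∀ y : E, ρ / 2 ≤ ‖y‖ → f y ≤ ENNReal.ofReal B) :
    ∫⁻ y in {y : E | ρ - κ * ρ ≤ ‖y‖ ∧ ‖y‖ ≤ ρ + κ * ρ}, f y ∂μ ≤ ENNReal.ofReal
      (B * (4 * finrank ℝ E * κ * (2 * ρ) ^ finrank ℝ E * μ.real (ball 0 1))) := by
  set S := {y : E | ρ - κ * ρ ≤ ‖y‖ ∧ ‖y‖ ≤ ρ + κ * ρ}
  calc ∫⁻ y in S, f y ∂μ
      ≤ ∫⁻ _ in S, ENNReal.ofReal B ∂μ :=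
        setLIntegral_mono' (by measurability) fun y hy => hf y (by nlinarith [hy.1])
    _ ≤ ENNReal.ofReal B * (ENNReal.ofReal (4 * finrank ℝ E * κ * (2 * ρ) ^ finrank ℝ E) *
          ENNReal.ofReal (μ.real (ball 0 1))) := by
        rw [setLIntegral_const, ofReal_measureReal measure_ball_lt_top.ne]
        gcongr
        exact addHaar_thin_annulus_le μ hρ hκ hκ'
    _ = _ := by
        rw [← ENNReal.ofReal_mul (by positivity), ← ENNReal.ofReal_mul' (by positivity)]

end MeasureTheory.Measure

theorem stmt_16_general (n s : ℕ) (hs : s ≤ n) (m : ℕ) (hm : m = n - s)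
    (c' : ℝ) (hc' : 0 < c') :
    ∃ C a₀ : ℝ, 0 < C ∧ 0 < a₀ ∧ ∀ a : ℝ, 0 < a → a < a₀ →
      ∫⁻ y in {y : EuclideanSpace ℝ (Fin (2 * n)) |
          Real.sqrt (2 * a) - c' * a ^ ((3 : ℝ) / 2) ≤ ‖y‖ ∧
          ‖y‖ ≤ Real.sqrt (2 * a) + c' * a ^ ((3 : ℝ) / 2)},
        ENNReal.ofReal ((a ^ m)⁻¹ * (‖y‖ ^ (2 * s))⁻¹)
      ≤ ENNReal.ofReal (C * a) := by
  set V := volume.real (ball (0 : EuclideanSpace ℝ (Fin (2 * n))) 1)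
  refine ⟨2 ^ s * (8 * n * 8 ^ n * (c' / √2) * V) + 1, 1 / (2 * c'), by positivity,
    by positivity, fun a ha ha₀ => ?_⟩
  set ρ := √(2 * a)
  have hρ2 : ρ ^ 2 = 2 * a := Real.sq_sqrt (by positivity)
  set κ := c' / √2 * a
  have hκ : κ ≤ 1 / 2 := by
    have hca : c' * a < 1 / 2 := by
      rw [lt_div_iff₀ (by positivity)] at ha₀
      linarith
    have : c' / √2 ≤ c' := div_le_self hc'.le Real.one_lt_sqrt_two.le
    nlinarith
  rw [rpow_three_halves_eq ha.le, show c' * (a / √2 * ρ) = κ * ρ by ring]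
  refine (volume.setLIntegral_thin_annulus_le (by positivity) (by positivity) hκ
    (B := 2 ^ s * (a ^ n)⁻¹) fun y hy => ENNReal.ofReal_le_ofReal ?_).trans
    (ENNReal.ofReal_le_ofReal ?_)
  · rw [pow_mul, show a ^ n = a ^ (m + s) by rw [hm, Nat.sub_add_cancel hs]]
    have hy2 : a / 2 ≤ ‖y‖ ^ 2 := by nlinarith [mul_self_le_mul_self (by positivity) hy]
    exact inv_pow_mul_inv_pow_le_of_half_le ha hy2 m s
  · have hρpow : (2 * ρ) ^ (2 * n) = 8 ^ n * a ^ n := by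
      rw [pow_mul, mul_pow, hρ2, ← mul_pow]; ring
    calc _ = 2 ^ s * (8 * n * 8 ^ n * (c' / √2) * V) * a := by
          rw [finrank_euclideanSpace_fin, hρpow]; simp only [κ]; push_cast; field_simp; ring
      _ ≤ _ := by gcongr; linarith

/-- The thin-annulus estimate from the proof of Proposition 5.4. -/
theorem stmt_16 (n s : ℕ) (hn : 1 ≤ n) (hs : s ≤ n) (m : ℕ) (hm : m = n - s)
    (c' : ℝ) (hc' : 0 < c') :
    ∃ C a₀ : ℝ, 0 < C ∧ 0 < a₀ ∧ ∀ a : ℝ, 0 < a → a < a₀ →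
      ∫⁻ y in {y : EuclideanSpace ℝ (Fin (2 * n)) |
          Real.sqrt (2 * a) - c' * a ^ ((3 : ℝ) / 2) ≤ ‖y‖ ∧
          ‖y‖ ≤ Real.sqrt (2 * a) + c' * a ^ ((3 : ℝ) / 2)},
        ENNReal.ofReal ((a ^ m)⁻¹ * (‖y‖ ^ (2 * s))⁻¹)
      ≤ ENNReal.ofReal (C * a) :=
  stmt_16_general n s hs m hm c' hc'
end
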